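/- For every integer n ≥ 0 there exists a constant C_n = C(β,n) such that for all z > 0 and all v with v ≢ ±π (mod 2βπ): |∂/∂v ( z^{n−1} · (∂ⁿ/∂zⁿ)(e^z · E(z,v)) )| ≤ C_n. -/

import Mathlib

open Real MeasureTheory

/-- The function `E(z,v)` appearing in Carslaw's representation of the conical heat kernel. -/
noncomputable def Efun (β z v : ℝ) : ℝ :=
  ∫ y in Set.Ioi (0 : ℝ),
    Real.exp (-z * Real.cosh y) *
      (2 * Real.sin (π / β) * (Real.cos (π / β) - Real.cos (v / β) * Real.cosh (y / β))) /
      ((Real.cosh (y / β) - Real.cos ((v - π) / β)) *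
        (Real.cosh (y / β) - Real.cos ((v + π) / β)))

/-!
Partial fractions write the integrand of `E` as `exp (-z cosh y)` times
`g(v, y) = sin θ₋ / (cosh (y/β) - cos θ₋) - sin θ₊ / (cosh (y/β) - cos θ₊)`, `θ± = (v ± π)/β`,
so that `e^z E(z, v) = ∫₀^∞ e^{-zu} g(v, y) dy` with `u = cosh y - 1`. Differentiating under the
integral sign, the quantity to bound is `z^{n-1} ∫₀^∞ (-u)^n e^{-zu} ∂ᵥg(v, y) dy`. Since
`(zu)^{n-1} e^{-zu} ≤ (n-1)!`, it suffices that `u |∂ᵥg| ≤ (4/β) e^{-(1/β - 1) y}`, which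
follows from `|∂ᵥg| ≤ (2/β) ∑± 1 / (cosh (y/β) - cos θ±)` and
`e^{(s-1) y} (cosh y - 1) ≤ cosh (s y) - 1` for `s ≥ 1`. For `n = 0` one first subtracts
`z⁻¹ ∫₀^∞ ∂ᵥg dy`, which vanishes because `∂ᵥg` is the `y`-derivative of a function vanishing
at `0` and at `∞`, and then uses `|e^{-zu} - 1| ≤ zu`.
-/

open Set Filter Topology
open scoped Nat

namespace Efun

lemma cosh_sub_one_eq (y : ℝ) : cosh y - 1 = 2 * sinh (y / 2) ^ 2 := by
  have h := cosh_two_mul (y / 2)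
  rw [mul_div_cancel₀ y two_ne_zero, cosh_sq'] at h
  linarith

lemma sq_div_two_le_cosh_sub_one (y : ℝ) : y ^ 2 / 2 ≤ cosh y - 1 := by
  have h : (y / 2) ^ 2 ≤ sinh (y / 2) ^ 2 := by
    rw [sq_le_sq, abs_sinh]
    exact self_le_sinh_iff.2 (abs_nonneg _)
  rw [cosh_sub_one_eq]
  nlinarith

lemma exp_mul_sinh_le_sinh_mul {s x : ℝ} (hs : 1 ≤ s) (hx : 0 ≤ x) :
    exp ((s - 1) * x) * sinh x ≤ sinh (s * x) := by
  have hδ : 0 ≤ sinh ((s - 1) * x) := sinh_nonneg_iff.2 (mul_nonneg (by linarith) hx)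
  calc exp ((s - 1) * x) * sinh x
      = sinh x * cosh ((s - 1) * x) + sinh x * sinh ((s - 1) * x) := by
        rw [← cosh_add_sinh]; ring
    _ ≤ sinh x * cosh ((s - 1) * x) + cosh x * sinh ((s - 1) * x) := by
        gcongr; exact (sinh_lt_cosh x).le
    _ = sinh (s * x) := by rw [← sinh_add]; ring_nf

lemma exp_mul_cosh_sub_one_le {s y : ℝ} (hs : 1 ≤ s) (hy : 0 ≤ y) :
    exp ((s - 1) * y) * (cosh y - 1) ≤ cosh (s * y) - 1 := by
  have hy2 : 0 ≤ y / 2 := by linarith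
  have h0 : 0 ≤ exp ((s - 1) * (y / 2)) * sinh (y / 2) :=
    mul_nonneg (exp_pos _).le (sinh_nonneg_iff.2 hy2)
  rw [cosh_sub_one_eq, cosh_sub_one_eq]
  calc exp ((s - 1) * y) * (2 * sinh (y / 2) ^ 2)
      = 2 * (exp ((s - 1) * (y / 2)) * sinh (y / 2)) ^ 2 := by
        rw [mul_pow, sq (exp _), ← exp_add]; ring_nf
    _ ≤ 2 * sinh (s * (y / 2)) ^ 2 := by
        gcongr; exact exp_mul_sinh_le_sinh_mul hs hy2
    _ = 2 * sinh (s * y / 2) ^ 2 := by rw [mul_div_assoc]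

lemma pow_mul_exp_neg_le_factorial {x : ℝ} (hx : 0 ≤ x) (k : ℕ) : x ^ k * exp (-x) ≤ k ! := by
  have h := pow_div_factorial_le_exp x hx k
  rw [div_le_iff₀ (by positivity)] at h
  calc x ^ k * exp (-x) ≤ exp x * k ! * exp (-x) := by gcongr
    _ = k ! := by rw [mul_comm (exp x), mul_assoc, ← exp_add, add_neg_cancel, exp_zero, mul_one]

lemma integrable_one_sub_cosh_pow_mul_exp (k : ℕ) {r : ℝ} (hr : 0 < r) :
    Integrable fun y => (1 - cosh y) ^ k * exp (r * (1 - cosh y)) := by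
  refine ((integrable_exp_neg_mul_sq (by positivity : 0 < r / 4)).const_mul
    ((2 / r) ^ k * k !)).mono' (by fun_prop) (Eventually.of_forall fun y => ?_)
  have hu : 0 ≤ cosh y - 1 := by linarith [one_le_cosh y]
  have hgauss : exp (-(r / 2 * (cosh y - 1))) ≤ exp (-(r / 4) * y ^ 2) :=
    exp_le_exp.2 (by nlinarith [sq_div_two_le_cosh_sub_one y])
  have hpoly := pow_mul_exp_neg_le_factorial (by positivity : 0 ≤ r / 2 * (cosh y - 1)) k
  -- split `exp (-r u)` as `exp (-r u / 2) ^ 2`: one half absorbs `u ^ k`, the other is Gaussian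
  calc ‖(1 - cosh y) ^ k * exp (r * (1 - cosh y))‖
      = (2 / r) ^ k * ((r / 2 * (cosh y - 1)) ^ k * exp (-(r / 2 * (cosh y - 1)))) *
          exp (-(r / 2 * (cosh y - 1))) := by
        rw [norm_mul, norm_pow, Real.norm_eq_abs, abs_sub_comm, abs_of_nonneg hu,
          Real.norm_of_nonneg (exp_pos _).le, ← mul_assoc, ← mul_pow,
          show 2 / r * (r / 2 * (cosh y - 1)) = cosh y - 1 by field_simp, mul_assoc, ← exp_add]
        congr 2
        ring
    _ ≤ (2 / r) ^ k * k ! * exp (-(r / 4) * y ^ 2) := by gcongr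

lemma hasDerivAt_integral_mul_of_bounded {α : Type*} [MeasurableSpace α] {μ : Measure α}
    {f : α → ℝ} (hf : Integrable f μ) {g g' : ℝ → α → ℝ} {v K₀ K : ℝ}
    (hg_meas : ∀ᶠ w in 𝓝 v, AEStronglyMeasurable (g w) μ) (hg_bdd : ∀ y, |g v y| ≤ K₀)
    (hg'_meas : AEStronglyMeasurable (g' v) μ)
    (hg' : ∀ᶠ w in 𝓝 v, ∀ y, HasDerivAt (g · y) (g' w y) w ∧ |g' w y| ≤ K) :
    HasDerivAt (fun w => ∫ y, f y * g w y ∂μ) (∫ y, f y * g' v y ∂μ) v := by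
  obtain ⟨s, hs, hs'⟩ := hg'.exists_mem
  refine (hasDerivAt_integral_of_dominated_loc_of_deriv_le hs
    (hg_meas.mono fun w hw => hf.aestronglyMeasurable.mul hw)
    (hf.mul_bdd hg_meas.self_of_nhds (ae_of_all _ hg_bdd)) (hf.aestronglyMeasurable.mul hg'_meas)
    (bound := fun y => ‖f y‖ * K) (ae_of_all _ fun y w hw => ?_) (hf.norm.mul_const K)
    (ae_of_all _ fun y w hw => (hs' w hw y).1.const_mul (f y))).2
  rw [norm_mul]
  gcongr
  exact (hs' w hw y).2

section LaplaceCosh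

variable {g : ℝ → ℝ} {K : ℝ}

lemma integrableOn_pow_mul_exp_mul (hg : AEStronglyMeasurable g (volume.restrict (Ioi 0)))
    (hgK : ∀ y, |g y| ≤ K) (k : ℕ) {z : ℝ} (hz : 0 < z) :
    IntegrableOn (fun y => (1 - cosh y) ^ k * exp (z * (1 - cosh y)) * g y) (Ioi 0) :=
  (integrable_one_sub_cosh_pow_mul_exp k hz).integrableOn.mul_bdd hg (ae_of_all _ hgK)

lemma hasDerivAt_integral_pow_mul_exp_mul
    (hg : AEStronglyMeasurable g (volume.restrict (Ioi 0))) (hgK : ∀ y, |g y| ≤ K) (k : ℕ)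
    {z : ℝ} (hz : 0 < z) :
    HasDerivAt (fun ζ => ∫ y in Ioi 0, (1 - cosh y) ^ k * exp (ζ * (1 - cosh y)) * g y)
      (∫ y in Ioi 0, (1 - cosh y) ^ (k + 1) * exp (z * (1 - cosh y)) * g y) z := by
  refine (hasDerivAt_integral_of_dominated_loc_of_deriv_le (Ioi_mem_nhds (half_lt_self hz))
    (F := fun ζ y => (1 - cosh y) ^ k * exp (ζ * (1 - cosh y)) * g y)
    (F' := fun ζ y => (1 - cosh y) ^ (k + 1) * exp (ζ * (1 - cosh y)) * g y)
    (Eventually.of_forall fun ζ => ((by fun_prop : Continuous fun y =>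
      (1 - cosh y) ^ k * exp (ζ * (1 - cosh y))).aestronglyMeasurable.mul hg))
    (integrableOn_pow_mul_exp_mul hg hgK k hz)
    ((by fun_prop : Continuous fun y =>
      (1 - cosh y) ^ (k + 1) * exp (z * (1 - cosh y))).aestronglyMeasurable.mul hg)
    (bound := fun y => ‖(1 - cosh y) ^ (k + 1) * exp (z / 2 * (1 - cosh y))‖ * K)
    (ae_of_all _ fun y ζ hζ => ?_)
    ((integrable_one_sub_cosh_pow_mul_exp (k + 1) (half_pos hz)).integrableOn.norm.mul_const K)
    (ae_of_all _ fun y ζ _ => ?_)).2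
  · have hexp : exp (ζ * (1 - cosh y)) ≤ exp (z / 2 * (1 - cosh y)) :=
      exp_le_exp.2 (mul_le_mul_of_nonpos_right (le_of_lt hζ) (by linarith [one_le_cosh y]))
    rw [norm_mul, norm_mul, norm_mul _ (exp _), Real.norm_of_nonneg (exp_pos _).le,
      Real.norm_of_nonneg (exp_pos _).le]
    gcongr
    exact hgK y
  · exact ((((hasDerivAt_mul_const (1 - cosh y)).exp).const_mul ((1 - cosh y) ^ k)).mul_const
      (g y)).congr_deriv (by ring)

lemma iteratedDeriv_integral_exp_mul (hg : AEStronglyMeasurable g (volume.restrict (Ioi 0)))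
    (hgK : ∀ y, |g y| ≤ K) (k : ℕ) {z : ℝ} (hz : 0 < z) :
    iteratedDeriv k (fun ζ => ∫ y in Ioi 0, exp (ζ * (1 - cosh y)) * g y) z =
      ∫ y in Ioi 0, (1 - cosh y) ^ k * exp (z * (1 - cosh y)) * g y := by
  induction k generalizing z with
  | zero => simp
  | succ k ih =>
    rw [iteratedDeriv_succ, EventuallyEq.deriv_eq
      (eventually_of_mem (Ioi_mem_nhds hz) fun ζ (hζ : 0 < ζ) => ih hζ)]
    exact (hasDerivAt_integral_pow_mul_exp_mul hg hgK k hz).deriv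

end LaplaceCosh

section KernelTerm

variable {θ : ℝ}

noncomputable def kernelTerm (θ t : ℝ) : ℝ := sin θ / (cosh t - cos θ)

noncomputable def kernelTermDeriv (θ t : ℝ) : ℝ :=
  (cos θ * cosh t - 1) / (cosh t - cos θ) ^ 2

lemma cosh_sub_cos_pos (hθ : cos θ < 1) (t : ℝ) : 0 < cosh t - cos θ := by
  linarith [one_le_cosh t]

lemma continuous_kernelTerm (hθ : cos θ < 1) : Continuous (kernelTerm θ) :=
  continuous_const.div (by fun_prop) fun t => (cosh_sub_cos_pos hθ t).ne'

lemma continuous_kernelTermDeriv (hθ : cos θ < 1) : Continuous (kernelTermDeriv θ) :=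
  (by fun_prop : Continuous fun t => cos θ * cosh t - 1).div (by fun_prop)
    fun t => pow_ne_zero 2 (cosh_sub_cos_pos hθ t).ne'

lemma abs_kernelTerm_le (hθ : cos θ < 1) (t : ℝ) : |kernelTerm θ t| ≤ 1 / (1 - cos θ) := by
  rw [kernelTerm, abs_div, abs_of_pos (cosh_sub_cos_pos hθ t)]
  exact div_le_div₀ zero_le_one (abs_sin_le_one θ) (by linarith) (by linarith [one_le_cosh t])

lemma abs_kernelTermDeriv_le (hθ : cos θ < 1) (t : ℝ) :
    |kernelTermDeriv θ t| ≤ 2 / (cosh t - cos θ) := by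
  have hd := cosh_sub_cos_pos hθ t
  have hnum : |cos θ * cosh t - 1| ≤ 2 * (cosh t - cos θ) := by
    rw [abs_le]
    constructor <;> nlinarith [one_le_cosh t, neg_one_le_cos θ, cos_le_one θ]
  rw [kernelTermDeriv, abs_div, abs_of_pos (pow_pos hd 2), div_le_div_iff₀ (pow_pos hd 2) hd]
  nlinarith

lemma abs_kernelTermDeriv_le_exp (hθ : cos θ < 1) (t : ℝ) :
    |kernelTermDeriv θ t| ≤ 8 / (1 - cos θ) * exp (-t) := by
  have h1 : 0 < 1 - cos θ := by linarith
  have hcosh : (1 - cos θ) * cosh t ≤ 2 * (cosh t - cos θ) := by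
    nlinarith [one_le_cosh t, neg_one_le_cos θ]
  have hexp : exp t ≤ 2 * cosh t := by rw [cosh_eq]; linarith [exp_pos (-t)]
  calc |kernelTermDeriv θ t| ≤ 2 / (cosh t - cos θ) := abs_kernelTermDeriv_le hθ t
    _ ≤ 2 / ((1 - cos θ) * exp t / 4) :=
        div_le_div_of_nonneg_left zero_le_two (by positivity)
          (by nlinarith [mul_le_mul_of_nonneg_left hexp h1.le])
    _ = 8 / (1 - cos θ) * exp (-t) := by rw [exp_neg]; field_simp; ring

lemma cosh_sub_one_mul_abs_kernelTermDeriv_le {s y : ℝ} (hs : 1 ≤ s) (hy : 0 ≤ y)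
    (hθ : cos θ < 1) :
    (cosh y - 1) * |kernelTermDeriv θ (s * y)| ≤ 2 * exp ((1 - s) * y) := by
  have hd := cosh_sub_cos_pos hθ (s * y)
  have hgrowth : cosh y - 1 ≤ exp ((1 - s) * y) * (cosh (s * y) - cos θ) :=
    calc cosh y - 1 = exp ((1 - s) * y) * (exp ((s - 1) * y) * (cosh y - 1)) := by
          rw [← mul_assoc, ← exp_add, ← add_mul, sub_add_sub_cancel', sub_self, zero_mul,
            exp_zero, one_mul]
      _ ≤ exp ((1 - s) * y) * (cosh (s * y) - 1) := by
          gcongr; exact exp_mul_cosh_sub_one_le hs hy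
      _ ≤ exp ((1 - s) * y) * (cosh (s * y) - cos θ) := by gcongr
  calc (cosh y - 1) * |kernelTermDeriv θ (s * y)|
      ≤ exp ((1 - s) * y) * (cosh (s * y) - cos θ) * (2 / (cosh (s * y) - cos θ)) :=
        mul_le_mul hgrowth (abs_kernelTermDeriv_le hθ _) (abs_nonneg _)
          (mul_pos (exp_pos _) hd).le
    _ = 2 * exp ((1 - s) * y) := by field_simp

lemma hasDerivAt_kernelTerm (hθ : cos θ < 1) (t : ℝ) :
    HasDerivAt (fun θ => kernelTerm θ t) (kernelTermDeriv θ t) θ := by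
  refine ((hasDerivAt_sin θ).div ((hasDerivAt_cos θ).const_sub (cosh t))
    (cosh_sub_cos_pos hθ t).ne').congr_deriv ?_
  rw [kernelTermDeriv]
  congr 1
  linear_combination -sin_sq_add_cos_sq θ

lemma hasDerivAt_sinh_div_cosh_sub_cos (hθ : cos θ < 1) (t : ℝ) :
    HasDerivAt (fun t => sinh t / (cosh t - cos θ)) (-kernelTermDeriv θ t) t := by
  refine ((hasDerivAt_sinh t).div ((hasDerivAt_cosh t).sub_const (cos θ))
    (cosh_sub_cos_pos hθ t).ne').congr_deriv ?_
  rw [kernelTermDeriv, ← neg_div]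
  congr 1
  linear_combination cosh_sq_sub_sinh_sq t

lemma tendsto_sinh_div_cosh_sub_atTop (c : ℝ) :
    Tendsto (fun t => sinh t / (cosh t - c)) atTop (𝓝 1) := by
  have hcosh : Tendsto (fun t => cosh t - c) atTop atTop := by
    refine tendsto_atTop_add_const_right _ (-c) (tendsto_atTop_mono (fun t => ?_)
      (tendsto_exp_atTop.atTop_div_const two_pos))
    rw [cosh_eq]; linarith [exp_pos (-t)]
  have hnum : Tendsto (fun t => c - exp (-t)) atTop (𝓝 c) := by
    simpa using tendsto_exp_neg_atTop_nhds_zero.const_sub c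
  have hlim := (hnum.div_atTop hcosh).const_add 1
  rw [add_zero] at hlim
  refine hlim.congr' ((hcosh.eventually_gt_atTop 0).mono fun t ht => ?_)
  rw [← cosh_sub_sinh, one_add_div ht.ne']
  ring_nf

end KernelTerm

section Kernel

variable {β w : ℝ}

noncomputable def kernel (β w y : ℝ) : ℝ :=
  kernelTerm ((w - π) / β) (y / β) - kernelTerm ((w + π) / β) (y / β)

noncomputable def kernelDeriv (β w y : ℝ) : ℝ :=
  (kernelTermDeriv ((w - π) / β) (y / β) - kernelTermDeriv ((w + π) / β) (y / β)) / β

def IsRegularAngle (β w : ℝ) : Prop := cos ((w - π) / β) < 1 ∧ cos ((w + π) / β) < 1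

lemma cos_div_lt_one {x : ℝ} (hβ : β ≠ 0) (hx : ∀ k : ℤ, x + 2 * k * β * π ≠ 0) :
    cos (x / β) < 1 := by
  refine (cos_le_one _).lt_of_ne fun h => ?_
  obtain ⟨k, hk⟩ := (cos_eq_one_iff _).1 h
  rw [eq_div_iff hβ] at hk
  exact hx (-k) (by push_cast; linear_combination -hk)

lemma isRegularAngle_of_forall_ne (hβ : β ≠ 0)
    (hw : ∀ k : ℤ, w + 2 * (k : ℝ) * β * π ≠ π ∧ w + 2 * (k : ℝ) * β * π ≠ -π) :
    IsRegularAngle β w :=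
  ⟨cos_div_lt_one hβ fun k h => (hw k).1 (by linarith),
    cos_div_lt_one hβ fun k h => (hw k).2 (by linarith)⟩

lemma integrand_eq_kernel (hw : IsRegularAngle β w) (y : ℝ) :
    2 * sin (π / β) * (cos (π / β) - cos (w / β) * cosh (y / β)) /
      ((cosh (y / β) - cos ((w - π) / β)) * (cosh (y / β) - cos ((w + π) / β))) =
      kernel β w y := by
  rw [kernel, kernelTerm, kernelTerm, div_sub_div _ _ (cosh_sub_cos_pos hw.1 _).ne'
    (cosh_sub_cos_pos hw.2 _).ne']
  congr 1
  rw [show (w - π) / β = w / β - π / β by ring, show (w + π) / β = w / β + π / β by ring,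
    sin_sub, sin_add, cos_sub, cos_add]
  linear_combination (-(2 * sin (π / β) * cos (π / β))) * sin_sq_add_cos_sq (w / β)

lemma exp_mul_Efun (hw : IsRegularAngle β w) (ζ : ℝ) :
    exp ζ * Efun β ζ w = ∫ y in Ioi 0, exp (ζ * (1 - cosh y)) * kernel β w y := by
  rw [Efun, ← integral_const_mul]
  refine setIntegral_congr_fun measurableSet_Ioi fun y _ => ?_
  rw [mul_div_assoc, integrand_eq_kernel hw, ← mul_assoc, ← exp_add]
  ring_nf

lemma continuous_kernel (hw : IsRegularAngle β w) : Continuous (kernel β w) :=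
  ((continuous_kernelTerm hw.1).comp (continuous_id.div_const β)).sub
    ((continuous_kernelTerm hw.2).comp (continuous_id.div_const β))

lemma continuous_kernelDeriv (hw : IsRegularAngle β w) : Continuous (kernelDeriv β w) :=
  (((continuous_kernelTermDeriv hw.1).comp (continuous_id.div_const β)).sub
    ((continuous_kernelTermDeriv hw.2).comp (continuous_id.div_const β))).div_const β

lemma abs_kernel_le (hw : IsRegularAngle β w) (y : ℝ) :
    |kernel β w y| ≤ 1 / (1 - cos ((w - π) / β)) + 1 / (1 - cos ((w + π) / β)) :=
  (abs_sub _ _).trans (add_le_add (abs_kernelTerm_le hw.1 _) (abs_kernelTerm_le hw.2 _))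

lemma hasDerivAt_kernel (hw : IsRegularAngle β w) (y : ℝ) :
    HasDerivAt (fun w => kernel β w y) (kernelDeriv β w y) w := by
  have h₁ := (hasDerivAt_kernelTerm hw.1 (y / β)).comp w
    (((hasDerivAt_id' w).sub_const π).div_const β)
  have h₂ := (hasDerivAt_kernelTerm hw.2 (y / β)).comp w
    (((hasDerivAt_id' w).add_const π).div_const β)
  exact (h₁.sub h₂).congr_deriv (by rw [kernelDeriv]; ring)

lemma abs_kernelDeriv_le (hβ : 0 < β) {c : ℝ} (h₁ : cos ((w - π) / β) ≤ c)
    (h₂ : cos ((w + π) / β) ≤ c) (hc : c < 1) (y : ℝ) :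
    |kernelDeriv β w y| ≤ 4 / (β * (1 - c)) := by
  have hterm : ∀ θ, cos θ ≤ c → |kernelTermDeriv θ (y / β)| ≤ 2 / (1 - c) := fun θ hθ =>
    (abs_kernelTermDeriv_le (hθ.trans_lt hc) _).trans
      (div_le_div_of_nonneg_left zero_le_two (by linarith) (by linarith [one_le_cosh (y / β)]))
  rw [kernelDeriv, abs_div, abs_of_pos hβ]
  calc |kernelTermDeriv ((w - π) / β) (y / β) - kernelTermDeriv ((w + π) / β) (y / β)| / β
      ≤ (2 / (1 - c) + 2 / (1 - c)) / β := by
        gcongr; exact (abs_sub _ _).trans (add_le_add (hterm _ h₁) (hterm _ h₂))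
    _ = 4 / (β * (1 - c)) := by field_simp; ring

lemma eventually_abs_kernelDeriv_le (hβ : 0 < β) (hw : IsRegularAngle β w) :
    ∃ K, ∀ᶠ w' in 𝓝 w, IsRegularAngle β w' ∧ ∀ y, |kernelDeriv β w' y| ≤ K := by
  obtain ⟨c, hc, hc1⟩ := exists_between (max_lt hw.1 hw.2)
  have h₁ : ∀ᶠ w' in 𝓝 w, cos ((w' - π) / β) < c :=
    (by fun_prop : Continuous fun w' => cos ((w' - π) / β)).continuousAt.eventually_lt
      continuousAt_const ((le_max_left _ _).trans_lt hc)
  have h₂ : ∀ᶠ w' in 𝓝 w, cos ((w' + π) / β) < c :=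
    (by fun_prop : Continuous fun w' => cos ((w' + π) / β)).continuousAt.eventually_lt
      continuousAt_const ((le_max_right _ _).trans_lt hc)
  exact ⟨4 / (β * (1 - c)), (h₁.and h₂).mono fun w' ⟨hw₁, hw₂⟩ =>
    ⟨⟨hw₁.trans hc1, hw₂.trans hc1⟩, abs_kernelDeriv_le hβ hw₁.le hw₂.le hc1⟩⟩

lemma integrableOn_kernelDeriv (hβ : 0 < β) (hw : IsRegularAngle β w) :
    IntegrableOn (kernelDeriv β w) (Ioi 0) := by
  refine ((integrableOn_exp_mul_Ioi (neg_neg_of_pos (inv_pos.2 hβ)) 0).const_mul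
    ((8 / (1 - cos ((w - π) / β)) + 8 / (1 - cos ((w + π) / β))) / β)).mono'
    (continuous_kernelDeriv hw).aestronglyMeasurable (ae_of_all _ fun y => ?_)
  have h₁ := abs_kernelTermDeriv_le_exp hw.1 (y / β)
  have h₂ := abs_kernelTermDeriv_le_exp hw.2 (y / β)
  rw [Real.norm_eq_abs, kernelDeriv, abs_div, abs_of_pos hβ, neg_mul, ← div_eq_inv_mul]
  calc |kernelTermDeriv ((w - π) / β) (y / β) - kernelTermDeriv ((w + π) / β) (y / β)| / β
      ≤ (8 / (1 - cos ((w - π) / β)) * exp (-(y / β)) +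
          8 / (1 - cos ((w + π) / β)) * exp (-(y / β))) / β := by
        gcongr; exact (abs_sub _ _).trans (add_le_add h₁ h₂)
    _ = _ := by ring

lemma integral_kernelDeriv_eq_zero (hβ : 0 < β) (hw : IsRegularAngle β w) :
    ∫ y in Ioi 0, kernelDeriv β w y = 0 := by
  have hS : ∀ θ, cos θ < 1 → ∀ y, HasDerivAt (fun y => sinh (y / β) / (cosh (y / β) - cos θ))
      (-kernelTermDeriv θ (y / β) * (1 / β)) y := fun θ hθ y =>
    ((hasDerivAt_sinh_div_cosh_sub_cos hθ (y / β)).comp y ((hasDerivAt_id' y).div_const β) :)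
  have hlim : ∀ θ, Tendsto (fun y => sinh (y / β) / (cosh (y / β) - cos θ)) atTop (𝓝 1) :=
    fun θ => (tendsto_sinh_div_cosh_sub_atTop _).comp (tendsto_id.atTop_div_const hβ)
  rw [integral_Ioi_of_hasDerivAt_of_tendsto'
    (fun y _ => ((hS _ hw.2 y).sub (hS _ hw.1 y)).congr_deriv (by rw [kernelDeriv]; ring))
    (integrableOn_kernelDeriv hβ hw) ((hlim _).sub (hlim _))]
  simp

lemma cosh_sub_one_mul_abs_kernelDeriv_le (hβ0 : 0 < β) (hβ1 : β ≤ 1) (hw : IsRegularAngle β w)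
    {y : ℝ} (hy : 0 ≤ y) :
    (cosh y - 1) * |kernelDeriv β w y| ≤ 4 / β * exp ((1 - β⁻¹) * y) := by
  have hs : 1 ≤ β⁻¹ := one_le_inv_iff₀.2 ⟨hβ0, hβ1⟩
  have h₁ := cosh_sub_one_mul_abs_kernelTermDeriv_le hs hy hw.1
  have h₂ := cosh_sub_one_mul_abs_kernelTermDeriv_le hs hy hw.2
  rw [← div_eq_inv_mul] at h₁ h₂
  rw [kernelDeriv, abs_div, abs_of_pos hβ0, mul_div_assoc']
  calc (cosh y - 1) * |kernelTermDeriv ((w - π) / β) (y / β) -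
        kernelTermDeriv ((w + π) / β) (y / β)| / β
      ≤ ((cosh y - 1) * |kernelTermDeriv ((w - π) / β) (y / β)| +
          (cosh y - 1) * |kernelTermDeriv ((w + π) / β) (y / β)|) / β := by
        rw [← mul_add]
        gcongr
        · linarith [one_le_cosh y]
        · exact abs_sub _ _
    _ ≤ (2 * exp ((1 - β⁻¹) * y) + 2 * exp ((1 - β⁻¹) * y)) / β := by gcongr
    _ = 4 / β * exp ((1 - β⁻¹) * y) := by ring

lemma abs_integral_mul_kernelDeriv_le (hβ0 : 0 < β) (hβ1 : β < 1) (hw : IsRegularAngle β w)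
    {f : ℝ → ℝ} {M : ℝ} (hf : ∀ y, 0 < y → |f y| ≤ M * (cosh y - 1)) :
    |∫ y in Ioi 0, f y * kernelDeriv β w y| ≤ M * (4 / (1 - β)) := by
  have hM : 0 ≤ M := nonneg_of_mul_nonneg_left ((abs_nonneg _).trans (hf 1 one_pos))
    (sub_pos.2 (one_lt_cosh.2 one_ne_zero))
  have ha : 1 - β⁻¹ < 0 := by linarith [one_lt_inv_iff₀.2 ⟨hβ0, hβ1⟩]
  calc |∫ y in Ioi 0, f y * kernelDeriv β w y|
      ≤ ∫ y in Ioi 0, M * (4 / β) * exp ((1 - β⁻¹) * y) := by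
        rw [← Real.norm_eq_abs]
        refine norm_integral_le_of_norm_le
          ((integrableOn_exp_mul_Ioi ha 0).const_mul (M * (4 / β)))
          ((ae_restrict_iff' measurableSet_Ioi).2 (ae_of_all _ fun y (hy : 0 < y) => ?_))
        rw [Real.norm_eq_abs, abs_mul, mul_assoc]
        calc |f y| * |kernelDeriv β w y| ≤ M * ((cosh y - 1) * |kernelDeriv β w y|) := by
              rw [← mul_assoc]; gcongr; exact hf y hy
          _ ≤ M * (4 / β * exp ((1 - β⁻¹) * y)) := mul_le_mul_of_nonneg_left
              (cosh_sub_one_mul_abs_kernelDeriv_le hβ0 hβ1.le hw hy.le) hM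
    _ = M * (4 / (1 - β)) := by
        rw [integral_const_mul, integral_exp_mul_Ioi ha, mul_zero, exp_zero]
        have : 1 - β ≠ 0 := by linarith
        rw [show 1 - β⁻¹ = -((1 - β) / β) by field_simp; ring]
        field_simp

end Kernel

lemma hasDerivAt_iteratedDeriv_exp_mul_Efun {β v z : ℝ} (hβ : 0 < β) (hv : IsRegularAngle β v)
    (hz : 0 < z) (n : ℕ) :
    HasDerivAt (fun w => iteratedDeriv n (fun ζ => exp ζ * Efun β ζ w) z)
      (∫ y in Ioi 0, (1 - cosh y) ^ n * exp (z * (1 - cosh y)) * kernelDeriv β v y) v := by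
  obtain ⟨K, hK⟩ := eventually_abs_kernelDeriv_le hβ hv
  have heq : (fun w => iteratedDeriv n (fun ζ => exp ζ * Efun β ζ w) z) =ᶠ[𝓝 v]
      fun w => ∫ y in Ioi 0, (1 - cosh y) ^ n * exp (z * (1 - cosh y)) * kernel β w y :=
    hK.mono fun w hw => by
      dsimp only
      rw [funext (exp_mul_Efun hw.1), iteratedDeriv_integral_exp_mul
        (continuous_kernel hw.1).aestronglyMeasurable (abs_kernel_le hw.1) n hz]
  refine HasDerivAt.congr_of_eventuallyEq ?_ heq
  exact hasDerivAt_integral_mul_of_bounded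
    (integrable_one_sub_cosh_pow_mul_exp n hz).integrableOn
    (hK.mono fun w hw => (continuous_kernel hw.1).aestronglyMeasurable) (abs_kernel_le hv)
    (continuous_kernelDeriv hv).aestronglyMeasurable
    (hK.mono fun w hw y => ⟨hasDerivAt_kernel hw.1 y, hw.2 y⟩)

section Bounds

variable {β w z : ℝ}

lemma abs_inv_mul_integral_exp_mul_kernelDeriv_le (hβ0 : 0 < β) (hβ1 : β < 1)
    (hw : IsRegularAngle β w) (hz : 0 < z) :
    |z⁻¹ * ∫ y in Ioi 0, exp (z * (1 - cosh y)) * kernelDeriv β w y| ≤ 4 / (1 - β) := by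
  have hg' := integrableOn_kernelDeriv hβ0 hw
  have hexp : ∀ y, exp (z * (1 - cosh y)) ≤ 1 := fun y =>
    exp_le_one_iff.2 (mul_nonpos_of_nonneg_of_nonpos hz.le (by linarith [one_le_cosh y]))
  have hexp_g' : IntegrableOn (fun y => exp (z * (1 - cosh y)) * kernelDeriv β w y) (Ioi 0) :=
    hg'.bdd_mul (by fun_prop) (ae_of_all _ fun y => by
      rw [Real.norm_of_nonneg (exp_pos _).le]; exact hexp y)
  have heq : z⁻¹ * ∫ y in Ioi 0, exp (z * (1 - cosh y)) * kernelDeriv β w y =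
      ∫ y in Ioi 0, z⁻¹ * (exp (z * (1 - cosh y)) - 1) * kernelDeriv β w y := by
    simp_rw [mul_sub_one, sub_mul, mul_assoc]
    rw [integral_sub (hexp_g'.const_mul _) (hg'.const_mul _), integral_const_mul,
      integral_const_mul, integral_kernelDeriv_eq_zero hβ0 hw, mul_zero, sub_zero]
  rw [heq, ← one_mul (4 / (1 - β))]
  refine abs_integral_mul_kernelDeriv_le hβ0 hβ1 hw fun y _ => ?_
  have h := add_one_le_exp (z * (1 - cosh y))
  rw [abs_mul, abs_of_pos (inv_pos.2 hz), abs_of_nonpos (by linarith [hexp y]), one_mul,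
    inv_mul_le_iff₀ hz]
  linarith

lemma abs_pow_mul_integral_kernelDeriv_le (hβ0 : 0 < β) (hβ1 : β < 1)
    (hw : IsRegularAngle β w) (hz : 0 < z) (m : ℕ) :
    |z ^ m * ∫ y in Ioi 0, (1 - cosh y) ^ (m + 1) * exp (z * (1 - cosh y)) * kernelDeriv β w y| ≤
      m ! * (4 / (1 - β)) := by
  rw [← integral_const_mul]
  simp_rw [← mul_assoc]
  refine abs_integral_mul_kernelDeriv_le hβ0 hβ1 hw fun y _ => ?_
  have hu : 0 ≤ cosh y - 1 := by linarith [one_le_cosh y]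
  calc |z ^ m * (1 - cosh y) ^ (m + 1) * exp (z * (1 - cosh y))|
      = (z * (cosh y - 1)) ^ m * exp (-(z * (cosh y - 1))) * (cosh y - 1) := by
        rw [abs_mul, abs_mul, abs_pow, abs_pow, abs_of_pos hz, abs_sub_comm, abs_of_nonneg hu,
          abs_of_pos (exp_pos _), mul_pow, pow_succ]
        ring_nf
    _ ≤ m ! * (cosh y - 1) :=
        mul_le_mul_of_nonneg_right (pow_mul_exp_neg_le_factorial (mul_nonneg hz.le hu) m) hu

lemma abs_rpow_mul_integral_kernelDeriv_le (hβ0 : 0 < β) (hβ1 : β < 1)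
    (hw : IsRegularAngle β w) (hz : 0 < z) (n : ℕ) :
    |z ^ ((n : ℝ) - 1) *
        ∫ y in Ioi 0, (1 - cosh y) ^ n * exp (z * (1 - cosh y)) * kernelDeriv β w y| ≤
      n ! * (4 / (1 - β)) := by
  cases n with
  | zero => simpa [rpow_neg_one] using abs_inv_mul_integral_exp_mul_kernelDeriv_le hβ0 hβ1 hw hz
  | succ m =>
    rw [Nat.cast_succ, add_sub_cancel_right, rpow_natCast]
    exact (abs_pow_mul_integral_kernelDeriv_le hβ0 hβ1 hw hz m).trans
      (by gcongr; exact m.le_succ)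

end Bounds

end Efun

/-- For each `n ≥ 0` there is `C_n` with
`|∂/∂v ( z^{n−1} (∂ⁿ/∂zⁿ)(e^z E(z,v)) )| ≤ C_n` for all `z > 0` and
`v ≢ ±π (mod 2βπ)`. -/
theorem Efun_ez_angle_derivative_bounds (β : ℝ) (hβ0 : 0 < β) (hβ1 : β < 1) (n : ℕ) :
    ∃ C > 0, ∀ z : ℝ, 0 < z → ∀ v : ℝ,
      (∀ k : ℤ, v + 2 * (k : ℝ) * β * π ≠ π ∧ v + 2 * (k : ℝ) * β * π ≠ -π) →
      |deriv (fun w => z ^ ((n : ℝ) - 1) *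
        iteratedDeriv n (fun ζ => Real.exp ζ * Efun β ζ w) z) v| ≤ C := by
  refine ⟨n ! * (4 / (1 - β)), by have := sub_pos.2 hβ1; positivity, fun z hz v hv => ?_⟩
  have hreg := Efun.isRegularAngle_of_forall_ne hβ0.ne' hv
  rw [((Efun.hasDerivAt_iteratedDeriv_exp_mul_Efun hβ0 hreg hz n).const_mul _).deriv]
  exact Efun.abs_rpow_mul_integral_kernelDeriv_le hβ0 hβ1 hreg hz n
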